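/- arXiv:1711.00506 — 8 statements merged into one kernel-verified Lean document; each statement's English description precedes it below -/
import Mathlib

section
/- Let d ≥ 1 and let Λ ⊆ ℕ^d be a finite multi-index set that is downward closed and convex. Then the set ⌊½Λ⌋ := {⌊α/2⌋ : α ∈ Λ} is itself a half-set for Λ, i.e., ⌊½Λ⌋ + ⌊½Λ⌋ ⊆ Λ. -/
open Pointwise

/-! Componentwise `⌊α/2⌋ + ⌊β/2⌋ ≤ ⌊(α + β)/2⌋`, and the right-hand side is the floor of the
midpoint of `α` and `β`, which lies in `Λ` by convexity with `t = 1/2`; downward closedness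
then puts `⌊α/2⌋ + ⌊β/2⌋` in `Λ`. -/

theorem Nat.floor_half_mul_add_one_sub_half_mul {K : Type*} [Field K] [LinearOrder K]
    [IsStrictOrderedRing K] [FloorSemiring K] (a b : ℕ) :
    ⌊(1 / 2 : K) * a + (1 - 1 / 2) * b⌋₊ = (a + b) / 2 := by
  have hmid : (1 / 2 : K) * a + (1 - 1 / 2) * b = ((a + b : ℕ) : K) / (2 : ℕ) := by
    push_cast; ring
  rw [hmid, Nat.floor_div_natCast, Nat.floor_natCast]

theorem midpoint_floor_mem {d : ℕ} {Λ : Finset (Fin d → ℕ)}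
    (hconv : ∀ t : ℝ, 0 ≤ t → t ≤ 1 → ∀ α ∈ Λ, ∀ β ∈ Λ,
      (fun j => ⌊t * (α j : ℝ) + (1 - t) * (β j : ℝ)⌋₊) ∈ Λ)
    {α β : Fin d → ℕ} (hα : α ∈ Λ) (hβ : β ∈ Λ) :
    (fun j => (α j + β j) / 2) ∈ Λ := by
  simpa only [Nat.floor_half_mul_add_one_sub_half_mul] using
    hconv (1 / 2) (by norm_num) (by norm_num) α hα β hβ

theorem floor_half_is_half_set_general {d : ℕ} (Λ : Finset (Fin d → ℕ))
    (hdc : ∀ α ∈ Λ, ∀ β : Fin d → ℕ, β ≤ α → β ∈ Λ)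
    (hconv : ∀ t : ℝ, 0 ≤ t → t ≤ 1 → ∀ α ∈ Λ, ∀ β ∈ Λ,
      (fun j => ⌊t * (α j : ℝ) + (1 - t) * (β j : ℝ)⌋₊) ∈ Λ) :
    (Λ.image fun α j => α j / 2) + (Λ.image fun α j => α j / 2) ⊆ Λ := by
  intro x hx
  obtain ⟨_, hy, _, hz, rfl⟩ := Finset.mem_add.mp hx
  obtain ⟨α, hα, rfl⟩ := Finset.mem_image.mp hy
  obtain ⟨β, hβ, rfl⟩ := Finset.mem_image.mp hz
  exact hdc _ (midpoint_floor_mem hconv hα hβ) _ fun j => Nat.div_add_div_le_add_div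

/-- If `Λ ⊆ ℕ^d` is finite, downward closed and convex, then
`⌊½Λ⌋ = {⌊α/2⌋ : α ∈ Λ}` is itself a half-set for `Λ`, i.e. `⌊½Λ⌋ + ⌊½Λ⌋ ⊆ Λ`. -/
theorem floor_half_is_half_set {d : ℕ} (hd : 1 ≤ d) (Λ : Finset (Fin d → ℕ))
    (hdc : ∀ α ∈ Λ, ∀ β : Fin d → ℕ, β ≤ α → β ∈ Λ)
    (hconv : ∀ t : ℝ, 0 ≤ t → t ≤ 1 → ∀ α ∈ Λ, ∀ β ∈ Λ,
      (fun j => ⌊t * (α j : ℝ) + (1 - t) * (β j : ℝ)⌋₊) ∈ Λ) :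
    (Λ.image fun α j => α j / 2) + (Λ.image fun α j => α j / 2) ⊆ Λ :=
  floor_half_is_half_set_general Λ hdc hconv
end

section
/- Let d ≥ 1 and let Λ ⊆ ℕ^d be a finite, nonempty multi-index set that is downward closed and convex. Then Λ has a unique maximal half-set, namely ⌊½Λ⌋ := {⌊α/2⌋ : α ∈ Λ}: the set ⌊½Λ⌋ is a half-set for Λ, every half-set for Λ is contained in ⌊½Λ⌋, and consequently every half-set of maximal cardinality equals ⌊½Λ⌋. -/
open Pointwise

/-!
Convexity at `t = 1/2` says that `⌊(α + β)/2⌋ ∈ Λ` for all `α, β ∈ Λ`, and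
`⌊α/2⌋ + ⌊β/2⌋ ≤ ⌊(α + β)/2⌋` componentwise, so downward closedness makes `⌊½Λ⌋` a half-set.
Conversely, if `Θ + Θ ⊆ Λ` then every `θ ∈ Θ` is `⌊(θ + θ)/2⌋` with `θ + θ ∈ Λ`, so `Θ ⊆ ⌊½Λ⌋`.
A half-set of maximal cardinality contains at least as many elements as `⌊½Λ⌋`, hence equals it.
-/

lemma Nat.floor_half_mul_add_half_mul (a b : ℕ) :
    ⌊(1 / 2 : ℝ) * a + (1 - 1 / 2) * b⌋₊ = (a + b) / 2 := by
  rw [← Nat.floor_div_eq_div (K := ℝ)]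
  push_cast
  ring_nf

section FloorHalf

variable {ι : Type*} [DecidableEq (ι → ℕ)]

/-- `⌊½Λ⌋`. -/
def floorHalf (Λ : Finset (ι → ℕ)) : Finset (ι → ℕ) :=
  Λ.image fun α j => α j / 2

lemma floorHalf_add_floorHalf_subset {Λ : Finset (ι → ℕ)}
    (hdc : ∀ α ∈ Λ, ∀ β : ι → ℕ, β ≤ α → β ∈ Λ)
    (hmid : ∀ α ∈ Λ, ∀ β ∈ Λ, (fun j => (α j + β j) / 2) ∈ Λ) :
    floorHalf Λ + floorHalf Λ ⊆ Λ := by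
  intro γ hγ
  obtain ⟨_, hα', _, hβ', rfl⟩ := Finset.mem_add.mp hγ
  obtain ⟨α, hα, rfl⟩ := Finset.mem_image.mp hα'
  obtain ⟨β, hβ, rfl⟩ := Finset.mem_image.mp hβ'
  exact hdc _ (hmid α hα β hβ) _ fun _ => Nat.div_add_div_le_add_div

lemma subset_floorHalf_of_add_self_subset {Λ Θ : Finset (ι → ℕ)} (hΘ : Θ + Θ ⊆ Λ) :
    Θ ⊆ floorHalf Λ := by
  intro θ hθ
  refine Finset.mem_image.mpr ⟨θ + θ, hΘ (Finset.add_mem_add hθ hθ), ?_⟩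
  funext j
  simp only [Pi.add_apply]
  omega

end FloorHalf

theorem floor_half_unique_maximal_half_set_general {d : ℕ}
    (Λ : Finset (Fin d → ℕ))
    (hdc : ∀ α ∈ Λ, ∀ β : Fin d → ℕ, β ≤ α → β ∈ Λ)
    (hconv : ∀ t : ℝ, 0 ≤ t → t ≤ 1 → ∀ α ∈ Λ, ∀ β ∈ Λ,
      (fun j => ⌊t * (α j : ℝ) + (1 - t) * (β j : ℝ)⌋₊) ∈ Λ) :
    ((Λ.image fun α j => α j / 2) + (Λ.image fun α j => α j / 2) ⊆ Λ) ∧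
    (∀ Θ : Finset (Fin d → ℕ), Θ + Θ ⊆ Λ → Θ ⊆ Λ.image fun α j => α j / 2) ∧
    (∀ Θ : Finset (Fin d → ℕ), Θ + Θ ⊆ Λ →
      (∀ Θ' : Finset (Fin d → ℕ), Θ' + Θ' ⊆ Λ → Θ'.card ≤ Θ.card) →
      Θ = Λ.image fun α j => α j / 2) := by
  have hmid : ∀ α ∈ Λ, ∀ β ∈ Λ, (fun j => (α j + β j) / 2) ∈ Λ := fun α hα β hβ => by
    simpa only [Nat.floor_half_mul_add_half_mul] using
      hconv (1 / 2) (by norm_num) (by norm_num) α hα β hβ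
  have hhalf : floorHalf Λ + floorHalf Λ ⊆ Λ := floorHalf_add_floorHalf_subset hdc hmid
  refine ⟨hhalf, fun Θ hΘ => subset_floorHalf_of_add_self_subset hΘ, fun Θ hΘ hmax => ?_⟩
  exact Finset.eq_of_subset_of_card_le (subset_floorHalf_of_add_self_subset hΘ) (hmax _ hhalf)

/-- If `Λ ⊆ ℕ^d` is finite, nonempty, downward closed and convex, then
`⌊½Λ⌋ = {⌊α/2⌋ : α ∈ Λ}` is the unique maximal half-set of `Λ`: it is a half-set,
every half-set is contained in it, and every half-set of maximal cardinality equals it. -/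
theorem floor_half_unique_maximal_half_set {d : ℕ} (hd : 1 ≤ d)
    (Λ : Finset (Fin d → ℕ)) (hne : Λ.Nonempty)
    (hdc : ∀ α ∈ Λ, ∀ β : Fin d → ℕ, β ≤ α → β ∈ Λ)
    (hconv : ∀ t : ℝ, 0 ≤ t → t ≤ 1 → ∀ α ∈ Λ, ∀ β ∈ Λ,
      (fun j => ⌊t * (α j : ℝ) + (1 - t) * (β j : ℝ)⌋₊) ∈ Λ) :
    ((Λ.image fun α j => α j / 2) + (Λ.image fun α j => α j / 2) ⊆ Λ) ∧
    (∀ Θ : Finset (Fin d → ℕ), Θ + Θ ⊆ Λ → Θ ⊆ Λ.image fun α j => α j / 2) ∧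
    (∀ Θ : Finset (Fin d → ℕ), Θ + Θ ⊆ Λ →
      (∀ Θ' : Finset (Fin d → ℕ), Θ' + Θ' ⊆ Λ → Θ'.card ≤ Θ.card) →
      Θ = Λ.image fun α j => α j / 2) :=
  floor_half_unique_maximal_half_set_general Λ hdc hconv
end

section
/- Let d ≥ 1, let μ be a positive measure on ℝ^d such that 0 < ∫ p(x)² dμ(x) < ∞ for every nonzero polynomial p in d variables, and let Λ ⊆ ℕ^d be a finite, downward-closed multi-index set. Suppose nodes x₁, …, x_M ∈ ℝ^d and real weights w₁, …, w_M satisfy ∑_{m=1}^M w_m p(x_m) = ∫ p(x) dμ(x) for every polynomial p ∈ P_Λ. Then M ≥ L(Λ), where L(Λ) is the maximal half-set size of Λ. -/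
open Pointwise MeasureTheory

/-- The maximal half-set size `L(Λ)`: the maximum cardinality of a multi-index set `Θ`
with `Θ + Θ ⊆ Λ`. -/
noncomputable def maxHalfSetSize {d : ℕ} (Λ : Finset (Fin d →₀ ℕ)) : ℕ :=
  sSup {n : ℕ | ∃ Θ : Finset (Fin d →₀ ℕ), Θ + Θ ⊆ Λ ∧ Θ.card = n}

/-- If `μ` is a positive measure on `ℝ^d` with `0 < ∫ p² dμ < ∞` for every
nonzero polynomial `p`, `Λ` is a finite downward-closed multi-index set, and an `M`-point
quadrature rule is exact on `P_Λ`, then `M ≥ L(Λ)`. -/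
theorem quadrature_size_lower_bound {d : ℕ} (hd : 1 ≤ d) (μ : Measure (Fin d → ℝ))
    (hμ : ∀ p : MvPolynomial (Fin d) ℝ, p ≠ 0 →
      Integrable (fun x => (MvPolynomial.eval x p) ^ 2) μ ∧
      0 < ∫ x, (MvPolynomial.eval x p) ^ 2 ∂μ)
    (Λ : Finset (Fin d →₀ ℕ))
    (hdc : ∀ α ∈ Λ, ∀ β : Fin d →₀ ℕ, β ≤ α → β ∈ Λ)
    (M : ℕ) (x : Fin M → (Fin d → ℝ)) (w : Fin M → ℝ)
    (hquad : ∀ p ∈ Submodule.span ℝ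
        ((fun α : Fin d →₀ ℕ => (MvPolynomial.monomial α (1 : ℝ))) '' ↑Λ),
      ∑ m, w m * MvPolynomial.eval (x m) p = ∫ y, MvPolynomial.eval y p ∂μ) :
    maxHalfSetSize Λ ≤ M := by
  have hne : {n : ℕ | ∃ Θ : Finset (Fin d →₀ ℕ), Θ + Θ ⊆ Λ ∧ Θ.card = n}.Nonempty :=
    ⟨0, ∅, by simp, rfl⟩
  refine csSup_le hne ?_
  rintro n ⟨Θ, hΘ, rfl⟩
  by_contra hlt
  push_neg at hlt
  -- `hlt : M < Θ.card`
  set v : ↥Θ → (Fin M → ℝ) :=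
    fun α m => MvPolynomial.eval (x m) (MvPolynomial.monomial (α : Fin d →₀ ℕ) (1 : ℝ)) with hv
  have hnli : ¬ LinearIndependent ℝ v := by
    intro hli
    have h1 := hli.fintype_card_le_finrank
    simp [Fintype.card_coe, Module.finrank_fin_fun] at h1
    omega
  obtain ⟨g, hg0, i, hgi⟩ := Fintype.not_linearIndependent_iff.mp hnli
  set p : MvPolynomial (Fin d) ℝ :=
    ∑ α : ↥Θ, g α • MvPolynomial.monomial (α : Fin d →₀ ℕ) (1 : ℝ) with hp
  have hcoeff : ∀ j : ↥Θ, MvPolynomial.coeff (j : Fin d →₀ ℕ) p = g j := by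
    intro j
    rw [hp, MvPolynomial.coeff_sum]
    rw [Finset.sum_eq_single j]
    · simp [MvPolynomial.coeff_monomial]
    · intro b _ hbj
      simp [MvPolynomial.coeff_monomial, Subtype.coe_injective.ne hbj]
    · simp
  have hpne : p ≠ 0 := by
    intro h
    apply hgi
    rw [← hcoeff i, h, MvPolynomial.coeff_zero]
  have hpev : ∀ m, MvPolynomial.eval (x m) p = 0 := by
    intro m
    have := congrFun hg0 m
    simpa [hp, Finset.sum_apply, hv] using this
  have hmem : p * p ∈ Submodule.span ℝ
      ((fun α : Fin d →₀ ℕ => (MvPolynomial.monomial α (1 : ℝ))) '' ↑Λ) := by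
    set s : Set (MvPolynomial (Fin d) ℝ) :=
      (fun α : Fin d →₀ ℕ => (MvPolynomial.monomial α (1 : ℝ))) '' ↑Θ with hs
    have hps : p ∈ Submodule.span ℝ s := by
      rw [hp]
      apply Submodule.sum_mem
      intro α _
      exact Submodule.smul_mem _ _ (Submodule.subset_span ⟨α, α.2, rfl⟩)
    have hmul : p * p ∈ Submodule.span ℝ s * Submodule.span ℝ s :=
      Submodule.mul_mem_mul hps hps
    rw [Submodule.span_mul_span] at hmul
    refine Submodule.span_mono ?_ hmul
    rintro q hq
    rw [Set.mem_mul] at hq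
    obtain ⟨a, ⟨α, hα, rfl⟩, b, ⟨β, hβ, rfl⟩, rfl⟩ := hq
    refine ⟨α + β, ?_, ?_⟩
    · exact hΘ (Finset.add_mem_add hα hβ)
    · simp [MvPolynomial.monomial_mul]
  have hq := hquad (p * p) hmem
  have hL : ∑ m, w m * MvPolynomial.eval (x m) (p * p) = 0 := by
    apply Finset.sum_eq_zero
    intro m _
    simp [hpev m]
  have hR : ∫ y, MvPolynomial.eval y (p * p) ∂μ = ∫ y, (MvPolynomial.eval y p) ^ 2 ∂μ := by
    congr 1
    ext y
    simp [sq]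
  rw [hL, hR] at hq
  exact absurd hq.symm (ne_of_gt (hμ p hpne).2)
end

section
/- Let μ be a positive measure on ℝ² such that 0 < ∫ p(x)² dμ(x) < ∞ for every nonzero polynomial p in 2 variables. Then there exist no 3 nodes x₁, x₂, x₃ ∈ ℝ² and real weights w₁, w₂, w₃ such that ∑_{m=1}^3 w_m p(x_m) = ∫ p(x) dμ(x) for every polynomial p in the span of the 9 monomials x₁^a x₂^b with 0 ≤ a, b ≤ 2 (the tensor-product space of degree 2). More generally, no such quadrature rule with fewer than 4 nodes exists. -/
open MeasureTheory

/-- For a positive measure `μ` on `ℝ²` with `0 < ∫ p² dμ < ∞` for every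
nonzero bivariate polynomial `p`, no quadrature rule with fewer than 4 nodes can be exact
on the tensor-product space of degree 2, i.e. the span of the monomials `x₁^a x₂^b`
with `0 ≤ a, b ≤ 2`.  In particular no 3-point rule exists. -/
theorem no_three_point_rule_tensor_degree_two (μ : Measure (Fin 2 → ℝ))
    (hμ : ∀ p : MvPolynomial (Fin 2) ℝ, p ≠ 0 →
      Integrable (fun x => (MvPolynomial.eval x p) ^ 2) μ ∧
      0 < ∫ x, (MvPolynomial.eval x p) ^ 2 ∂μ)
    (M : ℕ) (hM : M < 4) (x : Fin M → (Fin 2 → ℝ)) (w : Fin M → ℝ) :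
    ¬ (∀ p ∈ Submodule.span ℝ {q : MvPolynomial (Fin 2) ℝ | ∃ a b : ℕ, a ≤ 2 ∧ b ≤ 2 ∧
          q = MvPolynomial.monomial (Finsupp.single 0 a + Finsupp.single 1 b) (1 : ℝ)},
        ∑ m, w m * MvPolynomial.eval (x m) p = ∫ y, MvPolynomial.eval y p ∂μ) := by
  intro hquad
  classical
  set a : Fin 4 → ℕ := ![0,1,0,1] with ha
  set b : Fin 4 → ℕ := ![0,0,1,1] with hb
  set ν : Fin 4 → (Fin 2 →₀ ℕ) :=
    fun i => Finsupp.single 0 (a i) + Finsupp.single 1 (b i) with hνdef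
  have hν0 : ∀ i, ν i 0 = a i := by
    intro i; simp [hνdef, Finsupp.single_apply]
  have hν1 : ∀ i, ν i 1 = b i := by
    intro i; simp [hνdef, Finsupp.single_apply]
  have habinj : Function.Injective (fun i : Fin 4 => (a i, b i)) := by decide
  have hνinj : Function.Injective ν := by
    intro i j hij
    have h0 : a i = a j := by rw [← hν0, ← hν0, hij]
    have h1 : b i = b j := by rw [← hν1, ← hν1, hij]
    exact habinj (Prod.ext h0 h1)
  set θ : Fin 4 → MvPolynomial (Fin 2) ℝ := fun i => MvPolynomial.monomial (ν i) 1 with hθ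
  set A : Matrix (Fin M) (Fin 4) ℝ := Matrix.of fun m i => MvPolynomial.eval (x m) (θ i)
    with hA
  have hnotinj : ¬ Function.Injective A.mulVecLin := by
    intro h
    have h4 := LinearMap.finrank_le_finrank_of_injective h
    simp [Module.finrank_fin_fun] at h4
    omega
  obtain ⟨c, hc0, hcne⟩ : ∃ c, A.mulVecLin c = 0 ∧ c ≠ 0 := by
    rw [← LinearMap.ker_eq_bot] at hnotinj
    obtain ⟨c, hc, hcne⟩ := (Submodule.ne_bot_iff _).mp hnotinj
    exact ⟨c, hc, hcne⟩
  set p : MvPolynomial (Fin 2) ℝ := ∑ i, c i • θ i with hp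
  have hpne : p ≠ 0 := by
    obtain ⟨j, hj⟩ := Function.ne_iff.mp hcne
    intro hzero
    apply hj
    have hcj : MvPolynomial.coeff (ν j) p = c j := by
      rw [hp, MvPolynomial.coeff_sum]
      simp [hθ, MvPolynomial.coeff_smul, MvPolynomial.coeff_monomial, hνinj.eq_iff]
    rw [hzero] at hcj
    simpa using hcj.symm
  have heval : ∀ m, MvPolynomial.eval (x m) p = 0 := by
    intro m
    have hcm := congrFun hc0 m
    simp only [Matrix.mulVecLin_apply, Matrix.mulVec, dotProduct,
      Pi.zero_apply] at hcm
    calc MvPolynomial.eval (x m) p = ∑ i, A m i * c i := by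
          simp [hp, hA, mul_comm]
      _ = 0 := hcm
  have hpsq : p ^ 2 = ∑ i, ∑ j, (c i * c j) •
      MvPolynomial.monomial (Finsupp.single 0 (a i + a j) + Finsupp.single 1 (b i + b j))
        (1 : ℝ) := by
    rw [sq, hp, Finset.sum_mul_sum]
    refine Finset.sum_congr rfl fun i _ => Finset.sum_congr rfl fun j _ => ?_
    rw [hθ]
    rw [smul_mul_smul_comm, MvPolynomial.monomial_mul, one_mul]
    congr 1
    rw [hνdef]
    simp only [Finsupp.single_add]
    abel_nf
  have hab2 : ∀ i, a i ≤ 1 ∧ b i ≤ 1 := by decide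
  have hmem : p ^ 2 ∈ Submodule.span ℝ {q : MvPolynomial (Fin 2) ℝ |
      ∃ a b : ℕ, a ≤ 2 ∧ b ≤ 2 ∧
        q = MvPolynomial.monomial (Finsupp.single 0 a + Finsupp.single 1 b) (1 : ℝ)} := by
    rw [hpsq]
    refine Submodule.sum_mem _ fun i _ => Submodule.sum_mem _ fun j _ => ?_
    refine Submodule.smul_mem _ _ (Submodule.subset_span ?_)
    exact ⟨a i + a j, b i + b j,
      by have := hab2 i; have := hab2 j; omega,
      by have := hab2 i; have := hab2 j; omega, rfl⟩
  have hq := hquad (p ^ 2) hmem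
  have hleft : ∑ m, w m * MvPolynomial.eval (x m) (p ^ 2) = 0 := by
    simp [map_pow, heval]
  have hpos := (hμ p hpne).2
  rw [hleft] at hq
  have : (∫ y, MvPolynomial.eval y (p ^ 2) ∂μ) = ∫ y, (MvPolynomial.eval y p) ^ 2 ∂μ := by
    simp [map_pow]
  rw [this] at hq
  exact absurd hq.symm (ne_of_gt hpos)
end

section
/- Let d ≥ 1, let μ be a positive measure on ℝ^d such that 0 < ∫ p(x)² dμ(x) < ∞ for every nonzero polynomial p in d variables, let Λ ⊆ ℕ^d be a finite, downward-closed multi-index set with maximal half-set size L(Λ), and suppose an L(Λ)-point quadrature rule with nodes x₁, …, x_{L(Λ)} ∈ ℝ^d and real weights w₁, …, w_{L(Λ)} satisfies ∑_m w_m p(x_m) = ∫ p dμ for every p ∈ P_Λ. Then every weight is strictly positive: w_m > 0 for all m. -/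
open Pointwise MeasureTheory

/-- If `μ` is a positive measure on `ℝ^d` with `0 < ∫ p² dμ < ∞` for all
nonzero polynomials `p`, `Λ` is a finite downward-closed multi-index set with maximal
half-set size `L = L(Λ)`, and an `L`-point quadrature rule is exact on `P_Λ`
(a quasi-optimal rule), then all its weights are strictly positive. -/
theorem quasi_optimal_weights_positive {d : ℕ} (hd : 1 ≤ d) (μ : Measure (Fin d → ℝ))
    (hμ : ∀ p : MvPolynomial (Fin d) ℝ, p ≠ 0 →
      Integrable (fun x => (MvPolynomial.eval x p) ^ 2) μ ∧
      0 < ∫ x, (MvPolynomial.eval x p) ^ 2 ∂μ)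
    (Λ : Finset (Fin d →₀ ℕ))
    (hdc : ∀ α ∈ Λ, ∀ β : Fin d →₀ ℕ, β ≤ α → β ∈ Λ)
    (L : ℕ) (hL : L = maxHalfSetSize Λ)
    (x : Fin L → (Fin d → ℝ)) (w : Fin L → ℝ)
    (hquad : ∀ p ∈ Submodule.span ℝ
        ((fun α : Fin d →₀ ℕ => (MvPolynomial.monomial α (1 : ℝ))) '' ↑Λ),
      ∑ m, w m * MvPolynomial.eval (x m) p = ∫ y, MvPolynomial.eval y p ∂μ) :
    ∀ m, 0 < w m := by
  classical
  intro m
  -- The sup defining L is attained: get a half-set Θ of cardinality L.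
  have hmem : L ∈ {n : ℕ | ∃ Θ : Finset (Fin d →₀ ℕ), Θ + Θ ⊆ Λ ∧ Θ.card = n} := by
    rw [hL, maxHalfSetSize]
    apply Nat.sSup_mem
    · exact ⟨0, ∅, by simp⟩
    · refine ⟨Λ.card, ?_⟩
      rintro n ⟨Θ, hΘ, rfl⟩
      have hinj : Set.InjOn (fun a : Fin d →₀ ℕ => a + a) Θ := by
        intro a _ b _ h
        ext i
        have h2 := DFunLike.congr_fun h i
        simp only [Finsupp.add_apply] at h2
        omega
      calc Θ.card = (Θ.image fun a => a + a).card :=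
            (Finset.card_image_of_injOn hinj).symm
        _ ≤ Λ.card := Finset.card_le_card (fun z hz => by
            obtain ⟨a, ha, rfl⟩ := Finset.mem_image.mp hz
            exact hΘ (Finset.add_mem_add ha ha))
  obtain ⟨Θ, hΘ, hcard⟩ := hmem
  -- evaluation matrix at the nodes other than m
  let M : Matrix {k : Fin L // k ≠ m} Θ ℝ :=
    fun k α => MvPolynomial.eval (x k.1) (MvPolynomial.monomial (α : Fin d →₀ ℕ) (1 : ℝ))
  have hcardlt : Fintype.card {k : Fin L // k ≠ m} < Fintype.card Θ := by
    have h1 : Fintype.card {k : Fin L // k ≠ m} = L - 1 := by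
      have : Fintype.card {k : Fin L // k = m} = 1 := Fintype.card_subtype_eq m
      have h2 := Fintype.card_subtype_compl (fun k : Fin L => k = m)
      simp only [this, Fintype.card_fin] at h2
      exact h2
    have hm := m.pos
    rw [h1, Fintype.card_coe, hcard]
    omega
  have hker : ¬ Function.Injective M.mulVecLin := by
    intro hinj
    have h := LinearMap.finrank_le_finrank_of_injective hinj
    simp only [Module.finrank_fintype_fun_eq_card] at h
    omega
  have hne : LinearMap.ker M.mulVecLin ≠ ⊥ :=
    fun h => hker (LinearMap.ker_eq_bot.mp h)
  obtain ⟨c, hc0, hcne⟩ := (Submodule.ne_bot_iff _).mp hne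
  rw [LinearMap.mem_ker] at hc0
  -- the polynomial p
  set p : MvPolynomial (Fin d) ℝ :=
    ∑ α : Θ, MvPolynomial.monomial (α : Fin d →₀ ℕ) (c α) with hpdef
  have hevalk : ∀ k : Fin L, k ≠ m → MvPolynomial.eval (x k) p = 0 := by
    intro k hk
    have h2 : M.mulVecLin c ⟨k, hk⟩ = 0 := by rw [hc0]; rfl
    simp only [Matrix.mulVecLin_apply, Matrix.mulVec, dotProduct, M] at h2
    rw [hpdef, map_sum]
    rw [← h2]
    apply Finset.sum_congr rfl
    intro α _
    simp [MvPolynomial.eval_monomial, mul_comm]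
  have hp0 : p ≠ 0 := by
    obtain ⟨α, hα⟩ : ∃ α, c α ≠ 0 := by
      by_contra h; push_neg at h; exact hcne (funext h)
    intro hp
    have hco : MvPolynomial.coeff (α : Fin d →₀ ℕ) p = c α := by
      rw [hpdef, MvPolynomial.coeff_sum]
      rw [Fintype.sum_eq_single α]
      · simp [MvPolynomial.coeff_monomial]
      · intro β hβ
        rw [MvPolynomial.coeff_monomial, if_neg]
        intro h
        exact hβ (Subtype.ext h)
    rw [hp] at hco
    simp at hco
    exact hα hco.symm
  -- p² lies in the span of monomials over Λ
  have hpsq : p ^ 2 ∈ Submodule.span ℝ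
      ((fun α : Fin d →₀ ℕ => (MvPolynomial.monomial α (1 : ℝ))) '' ↑Λ) := by
    rw [sq, hpdef, Finset.sum_mul_sum]
    apply Submodule.sum_mem
    intro α _
    apply Submodule.sum_mem
    intro β _
    rw [MvPolynomial.monomial_mul]
    have hrw : (MvPolynomial.monomial ((α : Fin d →₀ ℕ) + (β : Fin d →₀ ℕ))) (c α * c β)
        = (c α * c β) • (MvPolynomial.monomial ((α : Fin d →₀ ℕ) + (β : Fin d →₀ ℕ))) (1 : ℝ) := by
      rw [MvPolynomial.smul_monomial, smul_eq_mul, mul_one]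
    rw [hrw]
    exact Submodule.smul_mem _ _ (Submodule.subset_span
      ⟨(α : Fin d →₀ ℕ) + (β : Fin d →₀ ℕ), hΘ (Finset.add_mem_add α.2 β.2), rfl⟩)
  have hq := hquad (p ^ 2) hpsq
  have hint := hμ p hp0
  have hsum : ∑ k, w k * MvPolynomial.eval (x k) (p ^ 2)
      = w m * (MvPolynomial.eval (x m) p) ^ 2 := by
    rw [Finset.sum_eq_single m]
    · simp [map_pow]
    · intro k _ hk
      simp [map_pow, hevalk k hk]
    · simp
  have hRHS : ∫ y, MvPolynomial.eval y (p ^ 2) ∂μ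
      = ∫ y, (MvPolynomial.eval y p) ^ 2 ∂μ := by
    simp [map_pow]
  rw [hsum, hRHS] at hq
  by_contra hw
  push_neg at hw
  nlinarith [hint.2, sq_nonneg (MvPolynomial.eval (x m) p)]
end

section
/- Let d ≥ 1, let μ be a positive measure on ℝ^d such that 0 < ∫ p(x)² dμ(x) < ∞ for every nonzero polynomial p in d variables, let Λ ⊆ ℕ^d be a finite, downward-closed multi-index set with maximal half-set size L = L(Λ), and let Θ be any maximal half-set for Λ. Let q₁, …, q_L be polynomials forming an orthonormal basis of P_Θ in L²(μ), i.e., ∫ q_j q_k dμ = δ_{jk}. If an L-point quadrature rule with nodes x₁, …, x_L ∈ ℝ^d and real weights w₁, …, w_L satisfies ∑_m w_m p(x_m) = ∫ p dμ for every p ∈ P_Λ, then the weights are given by w_m = 1 / ∑_{j=1}^L q_j(x_m)² for every m = 1, …, L. -/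
open Pointwise MeasureTheory

/-- With `μ` a positive measure on `ℝ^d` (with `0 < ∫ p² dμ < ∞` for
every nonzero polynomial), `Λ` finite downward closed with maximal half-set size `L`,
`Θ` a maximal half-set, and `q₁, …, q_L` an `L²(μ)`-orthonormal basis of `P_Θ`:
any `L`-point quadrature rule exact on `P_Λ` has weights
`w_m = 1 / ∑_j q_j(x_m)²`. -/
theorem quasi_optimal_weights_formula {d : ℕ} (hd : 1 ≤ d) (μ : Measure (Fin d → ℝ))
    (hμ : ∀ p : MvPolynomial (Fin d) ℝ, p ≠ 0 →
      Integrable (fun x => (MvPolynomial.eval x p) ^ 2) μ ∧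
      0 < ∫ x, (MvPolynomial.eval x p) ^ 2 ∂μ)
    (Λ : Finset (Fin d →₀ ℕ))
    (hdc : ∀ α ∈ Λ, ∀ β : Fin d →₀ ℕ, β ≤ α → β ∈ Λ)
    (L : ℕ) (hL : L = maxHalfSetSize Λ)
    (Θ : Finset (Fin d →₀ ℕ)) (hΘhalf : Θ + Θ ⊆ Λ) (hΘmax : Θ.card = L)
    (q : Fin L → MvPolynomial (Fin d) ℝ)
    (hqspan : Submodule.span ℝ (Set.range q) =
      Submodule.span ℝ ((fun α : Fin d →₀ ℕ => (MvPolynomial.monomial α (1 : ℝ))) '' ↑Θ))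
    (hqortho : ∀ j k, ∫ y, MvPolynomial.eval y (q j) * MvPolynomial.eval y (q k) ∂μ =
      if j = k then 1 else 0)
    (x : Fin L → (Fin d → ℝ)) (w : Fin L → ℝ)
    (hquad : ∀ p ∈ Submodule.span ℝ
        ((fun α : Fin d →₀ ℕ => (MvPolynomial.monomial α (1 : ℝ))) '' ↑Λ),
      ∑ m, w m * MvPolynomial.eval (x m) p = ∫ y, MvPolynomial.eval y p ∂μ) :
    ∀ m, w m = 1 / ∑ j, (MvPolynomial.eval (x m) (q j)) ^ 2 := by
  -- membership of each q j in the span of Θ-monomials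
  have hq_mem : ∀ j, q j ∈ Submodule.span ℝ
      ((fun α : Fin d →₀ ℕ => (MvPolynomial.monomial α (1 : ℝ))) '' ↑Θ) := by
    intro j
    rw [← hqspan]
    exact Submodule.subset_span ⟨j, rfl⟩
  -- products q j * q k lie in the span of Λ-monomials
  have h1 : ∀ j k, q j * q k ∈ Submodule.span ℝ
      ((fun α : Fin d →₀ ℕ => (MvPolynomial.monomial α (1 : ℝ))) '' ↑Λ) := by
    intro j k
    have hmul := Submodule.mul_mem_mul (hq_mem j) (hq_mem k)
    rw [Submodule.span_mul_span] at hmul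
    refine Submodule.span_le.mpr ?_ hmul
    rintro z hz
    rw [Set.mem_mul] at hz
    obtain ⟨a, ⟨α, hα, rfl⟩, b, ⟨β, hβ, rfl⟩, rfl⟩ := hz
    have hαβ : α + β ∈ Λ := hΘhalf (Finset.add_mem_add hα hβ)
    have : (MvPolynomial.monomial α (1:ℝ)) * (MvPolynomial.monomial β (1:ℝ))
        = MvPolynomial.monomial (α + β) (1:ℝ) := by
      rw [MvPolynomial.monomial_mul, one_mul]
    rw [this]
    exact Submodule.subset_span ⟨α + β, hαβ, rfl⟩
  -- quadrature applied to q j * q k gives Kronecker delta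
  have hδ : ∀ j k, ∑ m, w m * (MvPolynomial.eval (x m) (q j) *
      MvPolynomial.eval (x m) (q k)) = if j = k then 1 else 0 := by
    intro j k
    have := hquad (q j * q k) (h1 j k)
    simpa [MvPolynomial.eval_mul, hqortho j k] using this
  -- matrix formulation
  set A : Matrix (Fin L) (Fin L) ℝ :=
    Matrix.of fun j m => MvPolynomial.eval (x m) (q j) with hA
  set W : Matrix (Fin L) (Fin L) ℝ := Matrix.diagonal w with hW
  have hABA : A * (W * A.transpose) = 1 := by
    ext j k
    have := hδ j k
    simp only [Matrix.mul_apply, Matrix.diagonal_apply, Matrix.transpose_apply,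
      Matrix.one_apply, hA, hW, Matrix.of_apply]
    rw [← this]
    apply Finset.sum_congr rfl
    intro m _
    rw [Finset.sum_eq_single m]
    · simp; ring
    · intro b _ hb; simp [hb]; intro h; exact absurd h.symm hb
    · intro h; simp at h
  have h2 : (W * A.transpose) * A = 1 := mul_eq_one_comm.mp hABA
  intro m
  have hentry : ((W * A.transpose) * A) m m = 1 := by rw [h2]; simp
  have hsum : w m * ∑ j, (MvPolynomial.eval (x m) (q j)) ^ 2 = 1 := by
    rw [← hentry]
    simp only [Matrix.mul_apply, Matrix.diagonal_apply, Matrix.transpose_apply,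
      hA, hW, Matrix.of_apply, Finset.mul_sum]
    apply Finset.sum_congr rfl
    intro j _
    rw [Finset.sum_eq_single m]
    · simp; ring
    · intro b _ hb; simp [hb]; intro h; exact absurd h.symm hb
    · intro h; simp at h
  exact eq_one_div_of_mul_eq_one_left (by linarith [hsum])
end

section
/- Let d ≥ 1, let μ be a positive measure on ℝ^d such that 0 < ∫ p(x)² dμ(x) < ∞ for every nonzero polynomial p in d variables, let Λ ⊆ ℕ^d be a finite, downward-closed multi-index set with maximal half-set size L = L(Λ), let Θ be a maximal half-set for Λ, and let q₁, …, q_L be an L²(μ)-orthonormal basis of P_Θ. If an L-point quadrature rule with nodes x₁, …, x_L ∈ ℝ^d and real weights w₁, …, w_L is exact on P_Λ, then the L × L matrix V with entries V_{m,k} = q_k(x_m) is invertible. In particular, the interpolation problem from P_Θ on the nodes x₁, …, x_L is uniquely solvable. -/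
/-! Exactness of the rule on `P_Λ ⊇ P_Θ · P_Θ` turns the `L²(μ)`-orthonormality of the `q_k`
into orthonormality for the discrete inner product `∑ₘ wₘ f(xₘ) g(xₘ)`, i.e.
`Vᵀ diag(w) V = 1`, so `V` has a left inverse. -/

open Pointwise MeasureTheory

theorem MvPolynomial.mul_mem_span_monomial {R σ : Type*} [CommSemiring R]
    {s t u : Set (σ →₀ ℕ)} (hstu : s + t ⊆ u) {p r : MvPolynomial σ R}
    (hp : p ∈ Submodule.span R ((fun α => monomial α (1 : R)) '' s))
    (hr : r ∈ Submodule.span R ((fun α => monomial α (1 : R)) '' t)) :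
    p * r ∈ Submodule.span R ((fun α => monomial α (1 : R)) '' u) := by
  have hpr := Submodule.mul_mem_mul hp hr
  rw [Submodule.span_mul_span] at hpr
  refine Submodule.span_mono ?_ hpr
  rintro _ ⟨_, ⟨α, hα, rfl⟩, _, ⟨β, hβ, rfl⟩, rfl⟩
  exact ⟨α + β, hstu (Set.add_mem_add hα hβ), by simp [monomial_mul]⟩

open Matrix in
theorem Matrix.isUnit_of_weighted_orthonormal_cols {n R : Type*} [Fintype n] [DecidableEq n]
    [CommRing R] (V : Matrix n n R) (w : n → R)
    (h : ∀ j k, ∑ m, w m * (V m j * V m k) = if j = k then 1 else 0) : IsUnit V := by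
  have hleft : (Vᵀ * diagonal w) * V = 1 := by
    ext j k
    rw [one_apply, ← h j k]
    simp only [mul_apply (M := Vᵀ * diagonal w), mul_diagonal, transpose_apply]
    exact Finset.sum_congr rfl fun m _ => by ring
  exact (isUnit_iff_isUnit_det V).2 (isUnit_det_of_left_inverse hleft)

theorem quasi_optimal_vandermonde_invertible_general {d : ℕ}
    (μ : Measure (Fin d → ℝ))
    (Λ : Finset (Fin d →₀ ℕ))
    (L : ℕ)
    (Θ : Finset (Fin d →₀ ℕ)) (hΘhalf : Θ + Θ ⊆ Λ)
    (q : Fin L → MvPolynomial (Fin d) ℝ)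
    (hqspan : Submodule.span ℝ (Set.range q) =
      Submodule.span ℝ ((fun α : Fin d →₀ ℕ => (MvPolynomial.monomial α (1 : ℝ))) '' ↑Θ))
    (hqortho : ∀ j k, ∫ y, MvPolynomial.eval y (q j) * MvPolynomial.eval y (q k) ∂μ =
      if j = k then 1 else 0)
    (x : Fin L → (Fin d → ℝ)) (w : Fin L → ℝ)
    (hquad : ∀ p ∈ Submodule.span ℝ
        ((fun α : Fin d →₀ ℕ => (MvPolynomial.monomial α (1 : ℝ))) '' ↑Λ),
      ∑ m, w m * MvPolynomial.eval (x m) p = ∫ y, MvPolynomial.eval y p ∂μ) :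
    IsUnit (Matrix.of (fun m k : Fin L => MvPolynomial.eval (x m) (q k))) := by
  have hΘΛ : (Θ : Set (Fin d →₀ ℕ)) + Θ ⊆ Λ := by exact_mod_cast hΘhalf
  have hq : ∀ k, q k ∈ Submodule.span ℝ
      ((fun α : Fin d →₀ ℕ => (MvPolynomial.monomial α (1 : ℝ))) '' ↑Θ) :=
    fun k => hqspan ▸ Submodule.subset_span ⟨k, rfl⟩
  refine Matrix.isUnit_of_weighted_orthonormal_cols _ w fun j k => ?_
  rw [← hqortho j k]
  simpa using hquad _ (MvPolynomial.mul_mem_span_monomial hΘΛ (hq j) (hq k))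

/-- With `μ` a positive measure on `ℝ^d` (with `0 < ∫ p² dμ < ∞` for every
nonzero polynomial), `Λ` finite downward closed with maximal half-set size `L`, `Θ` a
maximal half-set, and `q₁, …, q_L` an `L²(μ)`-orthonormal basis of `P_Θ`: if an `L`-point
quadrature rule is exact on `P_Λ`, then the `L × L` Vandermonde-like matrix
`V_{m,k} = q_k(x_m)` is invertible. -/
theorem quasi_optimal_vandermonde_invertible {d : ℕ} (hd : 1 ≤ d)
    (μ : Measure (Fin d → ℝ))
    (hμ : ∀ p : MvPolynomial (Fin d) ℝ, p ≠ 0 →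
      Integrable (fun x => (MvPolynomial.eval x p) ^ 2) μ ∧
      0 < ∫ x, (MvPolynomial.eval x p) ^ 2 ∂μ)
    (Λ : Finset (Fin d →₀ ℕ))
    (hdc : ∀ α ∈ Λ, ∀ β : Fin d →₀ ℕ, β ≤ α → β ∈ Λ)
    (L : ℕ) (hL : L = maxHalfSetSize Λ)
    (Θ : Finset (Fin d →₀ ℕ)) (hΘhalf : Θ + Θ ⊆ Λ) (hΘmax : Θ.card = L)
    (q : Fin L → MvPolynomial (Fin d) ℝ)
    (hqspan : Submodule.span ℝ (Set.range q) =
      Submodule.span ℝ ((fun α : Fin d →₀ ℕ => (MvPolynomial.monomial α (1 : ℝ))) '' ↑Θ))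
    (hqortho : ∀ j k, ∫ y, MvPolynomial.eval y (q j) * MvPolynomial.eval y (q k) ∂μ =
      if j = k then 1 else 0)
    (x : Fin L → (Fin d → ℝ)) (w : Fin L → ℝ)
    (hquad : ∀ p ∈ Submodule.span ℝ
        ((fun α : Fin d →₀ ℕ => (MvPolynomial.monomial α (1 : ℝ))) '' ↑Λ),
      ∑ m, w m * MvPolynomial.eval (x m) p = ∫ y, MvPolynomial.eval y p ∂μ) :
    IsUnit (Matrix.of (fun m k : Fin L => MvPolynomial.eval (x m) (q k))) :=
  quasi_optimal_vandermonde_invertible_general μ Λ L Θ hΘhalf q hqspan hqortho x w hquad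
end

section
/- Let d ≥ 1 and n ≥ 2, let μ₀ be a probability measure on ℝ with finite moments up to order n that is symmetric, i.e., the pushforward of μ₀ under t ↦ −t equals μ₀. Let μ = μ₀ ⊗ ⋯ ⊗ μ₀ be the d-fold product measure on ℝ^d and let Λ = {q·e_j : 0 ≤ q ≤ n, 1 ≤ j ≤ d}. Suppose t₁, …, t_M ∈ ℝ and real weights w₁, …, w_M satisfy ∑_{m=1}^M w_m t_m^q = ∫ t^q dμ₀(t) for all 0 ≤ q ≤ n. Then for every choice of signs σ = (σ₁, …, σ_d) ∈ {−1, +1}^d, the multivariate rule with nodes y_m = (σ₁ t_m, σ₂ t_m, …, σ_d t_m) and weights w_m satisfies ∑_{m=1}^M w_m p(y_m) = ∫ p(x) dμ(x) for every polynomial p ∈ P_Λ. -/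
open MeasureTheory MvPolynomial

/-!
Exactness of a quadrature rule is preserved under linear combinations, so it suffices to treat
the pure powers `x_j ^ q`. Their integral against the product measure is the `q`-th moment of
`μ₀`, and at the signed node `σ • t_m` they take the value `σ_j ^ q * t_m ^ q`, so the rule
returns `σ_j ^ q * ∫ s ^ q ∂μ₀ = ∫ (σ_j * s) ^ q ∂μ₀`; the symmetry of `μ₀` removes the sign.
-/

theorem integral_comp_sign_mul_of_map_neg_eq {E : Type*} [NormedAddCommGroup E]
    [NormedSpace ℝ E] {μ₀ : Measure ℝ} (hsymm : μ₀.map (fun s : ℝ => -s) = μ₀) {σ : ℝ}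
    (hσ : σ = 1 ∨ σ = -1) (f : ℝ → E) :
    ∫ s, f (σ * s) ∂μ₀ = ∫ s, f s ∂μ₀ := by
  rcases hσ with rfl | rfl
  · simp
  · simp only [neg_one_mul]
    conv_rhs => rw [← hsymm]
    exact ((MeasurableEquiv.neg ℝ).measurableEmbedding.integral_map f).symm

section QuadratureRule

variable {ι κ : Type*} [Fintype κ] (μ : Measure (ι → ℝ)) (y : κ → ι → ℝ) (w : κ → ℝ)

def quadratureExactSubmodule : Submodule ℝ (MvPolynomial ι ℝ) where
  carrier := {p | Integrable (fun x => eval x p) μ ∧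
    ∑ m, w m * eval (y m) p = ∫ x, eval x p ∂μ}
  zero_mem' := by simp
  add_mem' := by
    rintro p q ⟨hp_int, hp_exact⟩ ⟨hq_int, hq_exact⟩
    refine ⟨by simp only [map_add]; exact hp_int.add hq_int, ?_⟩
    simp only [map_add, mul_add, Finset.sum_add_distrib, integral_add hp_int hq_int,
      hp_exact, hq_exact]
  smul_mem' := by
    rintro c p ⟨hp_int, hp_exact⟩
    refine ⟨by simpa only [smul_eval] using hp_int.const_mul c, ?_⟩
    simp only [smul_eval, integral_const_mul, ← hp_exact, Finset.mul_sum]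
    exact Finset.sum_congr rfl fun m _ => by ring

end QuadratureRule

theorem monomial_single_mem_quadratureExactSubmodule_pi {ι κ : Type*} [Fintype ι]
    [DecidableEq ι] [Fintype κ] {μ₀ : Measure ℝ} [IsProbabilityMeasure μ₀]
    (hsymm : μ₀.map (fun s : ℝ => -s) = μ₀) {t w : κ → ℝ} {σ : ι → ℝ} {j : ι}
    (hσ : σ j = 1 ∨ σ j = -1) {q : ℕ} (hint : Integrable (fun s : ℝ => s ^ q) μ₀)
    (hquad : ∑ m, w m * t m ^ q = ∫ s, s ^ q ∂μ₀) :
    monomial (Finsupp.single j q) 1 ∈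
      quadratureExactSubmodule (Measure.pi fun _ : ι => μ₀) (fun m i => σ i * t m) w := by
  have heval : ∀ x : ι → ℝ, eval x (monomial (Finsupp.single j q) 1) = x j ^ q := by
    simp [eval_monomial]
  refine ⟨by simp only [heval]; exact integrable_comp_eval (f := fun s => s ^ q) hint, ?_⟩
  simp only [heval, integral_comp_eval (μ := fun _ => μ₀) (f := fun s => s ^ q)
    hint.aestronglyMeasurable]
  calc ∑ m, w m * (σ j * t m) ^ q = σ j ^ q * ∑ m, w m * t m ^ q := by
        simp only [mul_pow, Finset.mul_sum]
        exact Finset.sum_congr rfl fun m _ => by ring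
    _ = ∫ s, (σ j * s) ^ q ∂μ₀ := by simp only [mul_pow, integral_const_mul, hquad]
    _ = ∫ s, s ^ q ∂μ₀ := integral_comp_sign_mul_of_map_neg_eq hsymm hσ _

theorem signed_diagonal_rule_exact_on_additive_set_general {d n : ℕ}
    (μ₀ : Measure ℝ) [IsProbabilityMeasure μ₀]
    (hsymm : Measure.map (fun s : ℝ => -s) μ₀ = μ₀)
    (hmom : ∀ q ≤ n, Integrable (fun s : ℝ => s ^ q) μ₀)
    (M : ℕ) (t : Fin M → ℝ) (w : Fin M → ℝ)
    (hquad : ∀ q ≤ n, ∑ m, w m * (t m) ^ q = ∫ s, s ^ q ∂μ₀)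
    (σ : Fin d → ℝ) (hσ : ∀ j, σ j = 1 ∨ σ j = -1) :
    ∀ p ∈ Submodule.span ℝ
        ((fun α : Fin d →₀ ℕ => (MvPolynomial.monomial α (1 : ℝ))) ''
          {α | ∃ q ≤ n, ∃ j : Fin d, α = Finsupp.single j q}),
      ∑ m, w m * MvPolynomial.eval (fun j => σ j * t m) p =
        ∫ x, MvPolynomial.eval x p ∂(Measure.pi fun _ : Fin d => μ₀) := by
  refine fun p hp => (Submodule.span_le
    (p := quadratureExactSubmodule (Measure.pi fun _ => μ₀) (fun m j => σ j * t m) w)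
    |>.mpr ?_ hp).2
  rintro _ ⟨_, ⟨q, hq, j, rfl⟩, rfl⟩
  exact monomial_single_mem_quadratureExactSubmodule_pi hsymm (hσ j) (hmom q hq) (hquad q hq)

/-- Let `μ₀` be a symmetric probability measure on `ℝ` (pushforward under
`t ↦ -t` equals `μ₀`) with finite moments up to order `n ≥ 2`, `μ = μ₀^⊗d`, and
`Λ = {q·e_j : 0 ≤ q ≤ n, 1 ≤ j ≤ d}`. If `(t_m; w_m)` is exact for `μ₀` on polynomials
of degree at most `n`, then for any signs `σ_j ∈ {−1, +1}` the rule with nodes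
`y_m = (σ₁ t_m, …, σ_d t_m)` and weights `w_m` is exact on `P_Λ` for `μ`. -/
theorem signed_diagonal_rule_exact_on_additive_set {d n : ℕ} (hd : 1 ≤ d) (hn : 2 ≤ n)
    (μ₀ : Measure ℝ) [IsProbabilityMeasure μ₀]
    (hsymm : Measure.map (fun s : ℝ => -s) μ₀ = μ₀)
    (hmom : ∀ q ≤ n, Integrable (fun s : ℝ => s ^ q) μ₀)
    (M : ℕ) (t : Fin M → ℝ) (w : Fin M → ℝ)
    (hquad : ∀ q ≤ n, ∑ m, w m * (t m) ^ q = ∫ s, s ^ q ∂μ₀)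
    (σ : Fin d → ℝ) (hσ : ∀ j, σ j = 1 ∨ σ j = -1) :
    ∀ p ∈ Submodule.span ℝ
        ((fun α : Fin d →₀ ℕ => (MvPolynomial.monomial α (1 : ℝ))) ''
          {α | ∃ q ≤ n, ∃ j : Fin d, α = Finsupp.single j q}),
      ∑ m, w m * MvPolynomial.eval (fun j => σ j * t m) p =
        ∫ x, MvPolynomial.eval x p ∂(Measure.pi fun _ : Fin d => μ₀) :=
  signed_diagonal_rule_exact_on_additive_set_general μ₀ hsymm hmom M t w hquad σ hσ
end
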